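/- In the tree reduced instance, for every A ⊆ {1, …, m}, setting W = {v^(i)_1 : i ∈ A}: if candidate c uniquely wins the election restricted to W (i.e., for every candidate y ≠ c, |H_W ∩ τ⁻¹(c)| > |H_W ∩ τ⁻¹(y)|), then |A| = ℓ and ⋃_{i ∈ A} S_i = U. -/

import Mathlib

/-- Vertices of the tree reduced instance: for each `i ∈ [m]`, the path `P^(i)` has
vertices `v i j` (`j : Fin 3`, the vertices `v^(i)_1, v^(i)_2, v^(i)_3`), `u i k`
(`k : Fin (3ℓ)`, the vertices `u^(i)_1, …, u^(i)_{3ℓ}`) and `w i`; the path `P^#` has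
vertices `zh 0, zh 1`; the path `P^*` has vertices `zs t` for `t : Fin (m + 1 - ℓ)`
(all 0-indexed). -/
inductive VT (ℓ m : ℕ) : Type
  | v (i : Fin m) (j : Fin 3) : VT ℓ m
  | u (i : Fin m) (k : Fin (3 * ℓ)) : VT ℓ m
  | w (i : Fin m) : VT ℓ m
  | zh (j : Fin 2) : VT ℓ m
  | zs (t : Fin (m + 1 - ℓ)) : VT ℓ m
  deriving DecidableEq

/-- The candidate set `C = U ∪ {c, d}`, where `U = {1, …, 3ℓ}`. -/
inductive CandT (ℓ : ℕ) : Type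
  | elem (k : Fin (3 * ℓ)) : CandT ℓ
  | c : CandT ℓ
  | d : CandT ℓ
  deriving DecidableEq

/-- Base edge relation of the tree reduced instance: consecutive vertices of each path
`P^(i) = (v^(i)_1, v^(i)_2, v^(i)_3, u^(i)_1, …, u^(i)_{3ℓ}, w^(i))`, of
`P^# = (z#_1, z#_2)` and of `P^* = (z*_1, …, z*_{m+1−ℓ})` are adjacent, and the last
vertex `z*_{m+1−ℓ}` of `P^*` is joined to each head `v^(i)_1` and to `z#_1`. -/
def baseRelT (ℓ m : ℕ) : VT ℓ m → VT ℓ m → Prop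
  | .v i j, .v i' j' => i = i' ∧ (j : ℕ) + 1 = (j' : ℕ)
  | .v i j, .u i' k => i = i' ∧ (j : ℕ) = 2 ∧ (k : ℕ) = 0
  | .u i k, .u i' k' => i = i' ∧ (k : ℕ) + 1 = (k' : ℕ)
  | .u i k, .w i' => i = i' ∧ (k : ℕ) + 1 = 3 * ℓ
  | .zh j, .zh j' => (j : ℕ) + 1 = (j' : ℕ)
  | .zs t, .zs t' => (t : ℕ) + 1 = (t' : ℕ)
  | .zs t, .v _ j => (t : ℕ) + 1 = m + 1 - ℓ ∧ (j : ℕ) = 0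
  | .zs t, .zh j => (t : ℕ) + 1 = m + 1 - ℓ ∧ (j : ℕ) = 0
  | _, _ => False

/-- The tree of the tree reduced instance. -/
def GT (ℓ m : ℕ) : SimpleGraph (VT ℓ m) := SimpleGraph.fromRel (baseRelT ℓ m)

/-- The voting function, given an enumeration `e i 0, e i 1, e i 2` of the elements of
each set `S_i`: `v^(i)_j` votes for `e^(i)_j`, `u^(i)_k` votes for `k`, the `w^(i)` and
`z#`'s vote for `c`, and the `z*`'s vote for `d`. -/
def τT (ℓ m : ℕ) (e : Fin m → Fin 3 → Fin (3 * ℓ)) : VT ℓ m → CandT ℓ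
  | .v i j => CandT.elem (e i j)
  | .u _ k => CandT.elem k
  | .w _ => CandT.c
  | .zh _ => CandT.c
  | .zs _ => CandT.d

/-- The set `S_i`, recovered from the enumeration of its elements. -/
def SetT (ℓ m : ℕ) (e : Fin m → Fin 3 → Fin (3 * ℓ)) (i : Fin m) :
    Finset (Fin (3 * ℓ)) :=
  Finset.image (e i) Finset.univ

/-- The distinguished vertex `x = z*_1`. -/
def xT (ℓ m : ℕ) (h : 0 < m + 1 - ℓ) : VT ℓ m := VT.zs ⟨0, h⟩

/-- `HW G W x`: the set of vertices reachable from `x` in the subgraph of `G` induced on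
the complement of `W` (each step of a connecting walk must avoid `W`). -/
def HW {V : Type*} (G : SimpleGraph V) (W : Set V) (x : V) : Set V :=
  {z | Relation.ReflTransGen (fun a b => G.Adj a b ∧ a ∉ W ∧ b ∉ W) x z}

/-- Candidate `c` uniquely wins the election restricted to `W`: every other candidate
gets strictly fewer votes among the voters of `H_W`. -/
def winsT (ℓ m : ℕ) (e : Fin m → Fin 3 → Fin (3 * ℓ)) (x : VT ℓ m)
    (W : Set (VT ℓ m)) : Prop :=
  ∀ y : CandT ℓ, y ≠ CandT.c →
    (HW (GT ℓ m) W x ∩ τT ℓ m e ⁻¹' {y}).ncard <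
      (HW (GT ℓ m) W x ∩ τT ℓ m e ⁻¹' {CandT.c}).ncard

namespace TWH
variable {ℓ m : ℕ}

def Hpred (A : Finset (Fin m)) : VT ℓ m → Prop
  | .v i _ => i ∉ A
  | .u i _ => i ∉ A
  | .w i => i ∉ A
  | .zh _ => True
  | .zs _ => True

lemma GT_adj {a b : VT ℓ m} :
    (GT ℓ m).Adj a b ↔ a ≠ b ∧ (baseRelT ℓ m a b ∨ baseRelT ℓ m b a) := by
  simp [GT, SimpleGraph.fromRel_adj]

lemma hw_forward {A : Finset (Fin m)} {h0 : 0 < m + 1 - ℓ} {z : VT ℓ m}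
    (hz : z ∈ HW (GT ℓ m) {z | ∃ i ∈ A, z = VT.v i 0} (xT ℓ m h0)) :
    Hpred A z := by
  induction hz with
  | refl => trivial
  | tail hpath hstep ih =>
    rename_i p q
    obtain ⟨hadj, _, hbW⟩ := hstep
    rw [GT_adj] at hadj
    obtain ⟨-, hrel⟩ := hadj
    clear hpath
    rcases p with ⟨i, j⟩ | ⟨i, k⟩ | ⟨i⟩ | ⟨j⟩ | ⟨t⟩ <;> rcases q with ⟨i', j'⟩ | ⟨i', k'⟩ | ⟨i'⟩ | ⟨j'⟩ | ⟨t'⟩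
    all_goals try trivial
    all_goals (rcases hrel with h | h <;> try exact h.elim)
    all_goals try (exact h.1 ▸ ih)
    all_goals intro hiA
    exact hbW ⟨i', hiA, by rw [VT.v.injEq]; exact ⟨rfl, by rw [Fin.ext_iff]; simpa using h.2⟩⟩


def Wv (A : Finset (Fin m)) : Set (VT ℓ m) := {z | ∃ i ∈ A, z = VT.v i 0}

lemma not_W_u {A : Finset (Fin m)} (i : Fin m) (k : Fin (3 * ℓ)) :
    VT.u i k ∉ Wv A := by rintro ⟨i', -, h⟩; cases h

lemma not_W_w {A : Finset (Fin m)} (i : Fin m) : (VT.w i : VT ℓ m) ∉ Wv A := by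
  rintro ⟨i', -, h⟩; cases h

lemma not_W_zh {A : Finset (Fin m)} (j : Fin 2) : (VT.zh j : VT ℓ m) ∉ Wv A := by
  rintro ⟨i', -, h⟩; cases h

lemma not_W_zs {A : Finset (Fin m)} (t : Fin (m + 1 - ℓ)) :
    (VT.zs t : VT ℓ m) ∉ Wv A := by rintro ⟨i', -, h⟩; cases h

lemma not_W_v {A : Finset (Fin m)} {i : Fin m} (hiA : i ∉ A) (j : Fin 3) :
    (VT.v i j : VT ℓ m) ∉ Wv A := by
  rintro ⟨i', hi', h⟩
  rw [VT.v.injEq] at h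
  exact hiA (h.1 ▸ hi')

variable {A : Finset (Fin m)} {h0 : 0 < m + 1 - ℓ}

/-- the step relation -/
def Rst (A : Finset (Fin m)) (a b : VT ℓ m) : Prop :=
  (GT ℓ m).Adj a b ∧ a ∉ Wv A ∧ b ∉ Wv A

lemma reach_zs (t : Fin (m + 1 - ℓ)) :
    Relation.ReflTransGen (Rst A) (xT ℓ m h0) (VT.zs t) := by
  obtain ⟨n, hn⟩ := t
  induction n with
  | zero => exact .refl
  | succ n ihn =>
    refine .tail (ihn (by omega)) ⟨GT_adj.2 ⟨?_, .inl ?_⟩, not_W_zs _, not_W_zs _⟩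
    · simp [VT.zs.injEq, Fin.ext_iff]
    · simp [baseRelT]

lemma reach_zh (hm : ℓ ≤ m) (j : Fin 2) :
    Relation.ReflTransGen (Rst A) (xT ℓ m h0) (VT.zh j) := by
  have h1 : Relation.ReflTransGen (Rst A) (xT ℓ m h0) (VT.zh 0) := by
    refine .tail (reach_zs ⟨m - ℓ, by omega⟩)
      ⟨GT_adj.2 ⟨by simp, .inl ?_⟩, not_W_zs _, not_W_zh _⟩
    simp only [baseRelT]
    omega
  fin_cases j
  · exact h1
  · refine .tail h1 ⟨GT_adj.2 ⟨?_, .inl ?_⟩, not_W_zh _, not_W_zh _⟩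
    · simp [VT.zh.injEq, Fin.ext_iff]
    · simp [baseRelT]

lemma reach_v (hm : ℓ ≤ m) {i : Fin m} (hiA : i ∉ A) (j : Fin 3) :
    Relation.ReflTransGen (Rst A) (xT ℓ m h0) (VT.v i j) := by
  have h1 : Relation.ReflTransGen (Rst A) (xT ℓ m h0) (VT.v i 0) := by
    refine .tail (reach_zs ⟨m - ℓ, by omega⟩)
      ⟨GT_adj.2 ⟨by simp, .inl ?_⟩, not_W_zs _, not_W_v hiA _⟩
    simp only [baseRelT]
    omega
  have h2 : Relation.ReflTransGen (Rst A) (xT ℓ m h0) (VT.v i 1) := by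
    refine .tail h1 ⟨GT_adj.2 ⟨?_, .inl ?_⟩, not_W_v hiA _, not_W_v hiA _⟩
    · simp [VT.v.injEq, Fin.ext_iff]
    · simp [baseRelT]
  have h3 : Relation.ReflTransGen (Rst A) (xT ℓ m h0) (VT.v i 2) := by
    refine .tail h2 ⟨GT_adj.2 ⟨?_, .inl ?_⟩, not_W_v hiA _, not_W_v hiA _⟩
    · simp [VT.v.injEq, Fin.ext_iff]
    · simp [baseRelT]
  fin_cases j <;> assumption

lemma reach_u (hm : ℓ ≤ m) {i : Fin m} (hiA : i ∉ A) (k : Fin (3 * ℓ)) :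
    Relation.ReflTransGen (Rst A) (xT ℓ m h0) (VT.u i k) := by
  obtain ⟨n, hn⟩ := k
  induction n with
  | zero =>
    refine .tail (reach_v hm hiA 2)
      ⟨GT_adj.2 ⟨by simp, .inl ?_⟩, not_W_v hiA _, not_W_u _ _⟩
    simp [baseRelT]
  | succ n ihn =>
    refine .tail (ihn (by omega)) ⟨GT_adj.2 ⟨?_, .inl ?_⟩, not_W_u _ _, not_W_u _ _⟩
    · simp [VT.u.injEq, Fin.ext_iff]
    · simp [baseRelT]

lemma reach_w (hℓ : 1 ≤ ℓ) (hm : ℓ ≤ m) {i : Fin m} (hiA : i ∉ A) :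
    Relation.ReflTransGen (Rst A) (xT ℓ m h0) (VT.w i) := by
  refine .tail (reach_u hm hiA ⟨3 * ℓ - 1, by omega⟩)
    ⟨GT_adj.2 ⟨by simp, .inl ?_⟩, not_W_u _ _, not_W_w _⟩
  exact ⟨rfl, show 3 * ℓ - 1 + 1 = 3 * ℓ by omega⟩

lemma hw_eq (hℓ : 1 ≤ ℓ) (hm : ℓ ≤ m) :
    HW (GT ℓ m) (Wv A) (xT ℓ m h0) = {z | Hpred A z} := by
  ext z
  constructor
  · exact fun hz => hw_forward hz
  · intro hz
    rcases z with ⟨i, j⟩ | ⟨i, k⟩ | ⟨i⟩ | ⟨j⟩ | ⟨t⟩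
    · exact reach_v hm hz j
    · exact reach_u hm hz k
    · exact reach_w hℓ hm hz
    · exact reach_zh hm j
    · exact reach_zs t


lemma count_c (hℓ : 1 ≤ ℓ) (hm : ℓ ≤ m) (e : Fin m → Fin 3 → Fin (3 * ℓ)) :
    HW (GT ℓ m) (Wv A) (xT ℓ m h0) ∩ τT ℓ m e ⁻¹' {CandT.c} =
      ↑(Aᶜ.image VT.w ∪ ({VT.zh 0, VT.zh 1} : Finset (VT ℓ m))) := by
  rw [hw_eq hℓ hm]
  ext z
  rcases z with ⟨i, j⟩ | ⟨i, k⟩ | ⟨i⟩ | ⟨j⟩ | ⟨t⟩ <;>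
    simp [Hpred, τT] <;> fin_cases j <;> simp

lemma card_c : (Aᶜ.image VT.w ∪ ({VT.zh 0, VT.zh 1} : Finset (VT ℓ m))).card =
    (m - A.card) + 2 := by
  rw [Finset.card_union_of_disjoint, Finset.card_image_of_injective _
    (fun a b h => by cases h; rfl)]
  · simp [Finset.card_compl]
  · simp [Finset.disjoint_left]

lemma count_d (hℓ : 1 ≤ ℓ) (hm : ℓ ≤ m) (e : Fin m → Fin 3 → Fin (3 * ℓ)) :
    HW (GT ℓ m) (Wv A) (xT ℓ m h0) ∩ τT ℓ m e ⁻¹' {CandT.d} =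
      ↑(Finset.univ.image (VT.zs : Fin (m + 1 - ℓ) → VT ℓ m)) := by
  rw [hw_eq hℓ hm]
  ext z
  rcases z with ⟨i, j⟩ | ⟨i, k⟩ | ⟨i⟩ | ⟨j⟩ | ⟨t⟩ <;> simp [Hpred, τT]

lemma card_d : (Finset.univ.image (VT.zs : Fin (m + 1 - ℓ) → VT ℓ m)).card =
    m + 1 - ℓ := by
  rw [Finset.card_image_of_injective _ (fun a b h => by cases h; rfl)]
  simp

lemma count_elem (hℓ : 1 ≤ ℓ) (hm : ℓ ≤ m) (e : Fin m → Fin 3 → Fin (3 * ℓ))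
    (k : Fin (3 * ℓ)) :
    HW (GT ℓ m) (Wv A) (xT ℓ m h0) ∩ τT ℓ m e ⁻¹' {CandT.elem k} =
      ↑((Aᶜ.biUnion fun i => (Finset.univ.filter fun j => e i j = k).image (VT.v i)) ∪
        Aᶜ.image fun i => VT.u i k) := by
  rw [hw_eq hℓ hm]
  ext z
  rcases z with ⟨i, j⟩ | ⟨i, k'⟩ | ⟨i⟩ | ⟨j⟩ | ⟨t⟩ <;>
    simp [Hpred, τT, eq_comm, and_comm] <;> aesop

lemma card_elem (e : Fin m → Fin 3 → Fin (3 * ℓ)) (hinj : ∀ i, Function.Injective (e i))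
    (k : Fin (3 * ℓ)) :
    ((Aᶜ.biUnion fun i => (Finset.univ.filter fun j => e i j = k).image (VT.v i)) ∪
        Aᶜ.image fun i => VT.u i k).card =
      (Aᶜ.filter fun i => k ∈ SetT ℓ m e i).card + (m - A.card) := by
  rw [Finset.card_union_of_disjoint, Finset.card_biUnion,
    Finset.card_image_of_injective _ (fun a b h => by cases h; rfl)]
  · congr 1
    · rw [Finset.card_filter]
      refine Finset.sum_congr rfl fun i _ => ?_
      rw [Finset.card_image_of_injective _ (fun a b h => by cases h; rfl)]
      by_cases hk : k ∈ SetT ℓ m e i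
      · simp only [hk, if_true]
        obtain ⟨j0, -, hj0⟩ := Finset.mem_image.1 hk
        rw [show (Finset.univ.filter fun j => e i j = k) = {j0} from ?_, Finset.card_singleton]
        ext j
        simp only [Finset.mem_filter, Finset.mem_univ, true_and, Finset.mem_singleton]
        exact ⟨fun h => hinj i (h.trans hj0.symm), fun h => h ▸ hj0⟩
      · simp only [hk, if_false, Finset.card_eq_zero, Finset.filter_eq_empty_iff]
        intro j _ hj
        exact hk (Finset.mem_image.2 ⟨j, Finset.mem_univ _, hj⟩)
    · simp [Finset.card_compl]
  · intro a _ b _ hab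
    simp only [Finset.disjoint_left, Finset.mem_image]
    rintro z ⟨j, -, rfl⟩ ⟨j', -, h⟩
    exact hab (by cases h; rfl)
  · simp only [Finset.disjoint_left, Finset.mem_biUnion, Finset.mem_image,
      Finset.mem_filter, Finset.mem_compl]
    rintro z ⟨i, -, j, -, rfl⟩ ⟨i', -, h⟩
    cases h

end TWH

/-- If deleting the heads `v^(i)_1` for `i ∈ A` makes candidate `c` uniquely win, then
`|A| = ℓ` and `⋃_{i ∈ A} S_i = U`. -/
theorem tree_wins_heads_implies_exact_cover (ℓ m : ℕ) (hℓ : 1 ≤ ℓ) (hm : ℓ ≤ m)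
    (e : Fin m → Fin 3 → Fin (3 * ℓ))
    (hinj : ∀ i, Function.Injective (e i))
    (hcov : Finset.univ.biUnion (SetT ℓ m e) = Finset.univ)
    (htwo : ∀ k : Fin (3 * ℓ),
      (Finset.univ.filter fun i => k ∈ SetT ℓ m e i).card = 2)
    (A : Finset (Fin m))
    (hwin : winsT ℓ m e (xT ℓ m (by omega)) {z | ∃ i ∈ A, z = VT.v i 0}) :
    A.card = ℓ ∧ A.biUnion (SetT ℓ m e) = Finset.univ := by
  classical
  have h0 : 0 < m + 1 - ℓ := by omega
  have hwin' : winsT ℓ m e (xT ℓ m h0) (TWH.Wv A) := hwin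
  have ham : A.card ≤ m := by simpa using Finset.card_le_univ A
  have hc : (HW (GT ℓ m) (TWH.Wv A) (xT ℓ m h0) ∩ τT ℓ m e ⁻¹' {CandT.c}).ncard =
      (m - A.card) + 2 := by
    rw [TWH.count_c hℓ hm e, Set.ncard_coe_finset, TWH.card_c]
  have hd := hwin' CandT.d (by simp)
  rw [hc, TWH.count_d hℓ hm e, Set.ncard_coe_finset, TWH.card_d] at hd
  have haℓ : A.card ≤ ℓ := by omega
  have hbk : ∀ k, 1 ≤ (A.filter fun i => k ∈ SetT ℓ m e i).card := by
    intro k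
    have hk := hwin' (CandT.elem k) (by simp)
    rw [hc, TWH.count_elem hℓ hm e k, Set.ncard_coe_finset, TWH.card_elem e hinj k] at hk
    have h2 : (A.filter fun i => k ∈ SetT ℓ m e i).card +
        (Aᶜ.filter fun i => k ∈ SetT ℓ m e i).card = 2 := by
      rw [← htwo k, ← Finset.card_union_of_disjoint
        (Finset.disjoint_filter_filter disjoint_compl_right),
        ← Finset.filter_union, Finset.union_compl]
    omega
  have hcov' : A.biUnion (SetT ℓ m e) = Finset.univ := by
    ext k
    simp only [Finset.mem_univ, iff_true, Finset.mem_biUnion]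
    have h1 := hbk k
    rw [Finset.one_le_card] at h1
    obtain ⟨i, hi⟩ := h1
    rw [Finset.mem_filter] at hi
    exact ⟨i, hi.1, hi.2⟩
  have hsum : ∑ k : Fin (3 * ℓ), (A.filter fun i => k ∈ SetT ℓ m e i).card =
      3 * A.card := by
    calc ∑ k : Fin (3 * ℓ), (A.filter fun i => k ∈ SetT ℓ m e i).card
        = ∑ k : Fin (3 * ℓ), ∑ i ∈ A, if k ∈ SetT ℓ m e i then 1 else 0 :=
          Finset.sum_congr rfl fun k _ => Finset.card_filter _ _
      _ = ∑ i ∈ A, ∑ k : Fin (3 * ℓ), if k ∈ SetT ℓ m e i then 1 else 0 :=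
          Finset.sum_comm
      _ = ∑ i ∈ A, (Finset.univ.filter fun k => k ∈ SetT ℓ m e i).card :=
          Finset.sum_congr rfl fun i _ => (Finset.card_filter _ _).symm
      _ = ∑ i ∈ A, (SetT ℓ m e i).card := by
          refine Finset.sum_congr rfl fun i _ => ?_
          congr 1
          exact Finset.filter_univ_mem _
      _ = ∑ i ∈ A, 3 := by
          refine Finset.sum_congr rfl fun i _ => ?_
          rw [SetT, Finset.card_image_of_injective _ (hinj i)]
          simp
      _ = 3 * A.card := by rw [Finset.sum_const, smul_eq_mul, mul_comm]
  have hge : 3 * ℓ ≤ 3 * A.card := by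
    calc 3 * ℓ = ∑ _k : Fin (3 * ℓ), 1 := by simp
      _ ≤ ∑ k : Fin (3 * ℓ), (A.filter fun i => k ∈ SetT ℓ m e i).card :=
          Finset.sum_le_sum fun k _ => hbk k
      _ = 3 * A.card := hsum
  exact ⟨by omega, hcov'⟩
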